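/- Ramanujan's dilogarithm identity: Li₂(1/3) − (1/6)·Li₂(1/9) = π²/18 − (log 3)²/6. -/

import Mathlib

/-!
Two functional equations of `Li₂` on `[-1, 1]`, where its series converges uniformly, give the
identity. Splitting the series into even and odd terms gives the duplication formula
`Li₂(x) + Li₂(-x) = ½ Li₂(x²)`. Landen's identity `Li₂(x) + Li₂(x/(x-1)) = -½ log²(1-x)` holds on
`(-1, 1/2)` because the derivative of the difference vanishes (as `x Li₂'(x) = -log(1-x)`), and on
`[-1, 1/2]` by continuity. At `x = 1/2`, with `Li₂(-1) = -π²/12` from duplication and `ζ(2)`, it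
evaluates `Li₂(1/2)`; Landen at `±1/3` and duplication at `1/3` and `1/2` then combine linearly.
-/

/-- The polylogarithm `Li_s(x) = ∑_{n ≥ 1} x^n / n^s` as a real series. -/
noncomputable def Li (s : ℕ) (x : ℝ) : ℝ := ∑' n : ℕ, x ^ (n + 1) / (n + 1 : ℝ) ^ s

open Real Set Filter

section Series

variable {s : ℕ} {x : ℝ}

lemma summable_one_div_nat_add_one_pow (hs : 2 ≤ s) :
    Summable fun n : ℕ => 1 / ((n : ℝ) + 1) ^ s := by
  exact_mod_cast (summable_nat_add_iff 1).mpr (Real.summable_one_div_nat_pow.mpr hs)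

lemma norm_pow_succ_div_le (n : ℕ) (hx : |x| ≤ 1) :
    ‖x ^ (n + 1) / ((n : ℝ) + 1) ^ s‖ ≤ 1 / ((n : ℝ) + 1) ^ s := by
  rw [norm_div, norm_pow, Real.norm_eq_abs, norm_of_nonneg (by positivity)]
  gcongr
  exact pow_le_one₀ (abs_nonneg x) hx

lemma hasSum_Li (hs : 2 ≤ s) (hx : |x| ≤ 1) :
    HasSum (fun n : ℕ => x ^ (n + 1) / ((n : ℝ) + 1) ^ s) (Li s x) :=
  ((summable_one_div_nat_add_one_pow hs).of_norm_bounded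
    fun n => norm_pow_succ_div_le n hx).hasSum

lemma continuousOn_Li (hs : 2 ≤ s) : ContinuousOn (Li s) (Icc (-1) 1) :=
  continuousOn_tsum (fun n => by fun_prop) (summable_one_div_nat_add_one_pow hs)
    fun n _ hx => norm_pow_succ_div_le n (abs_le.mpr hx)

@[simp] lemma Li_zero_right : Li s 0 = 0 := by simp [Li]

lemma Li_add_Li_neg (hs : 2 ≤ s) (hx : |x| ≤ 1) :
    Li s x + Li s (-x) = 2 * Li s (x ^ 2) / 2 ^ s := by
  have hx2 : |x ^ 2| ≤ 1 := by rw [abs_pow]; exact pow_le_one₀ (abs_nonneg x) hx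
  set f : ℕ → ℝ := fun n => x ^ (n + 1) / ((n : ℝ) + 1) ^ s + (-x) ^ (n + 1) / ((n : ℝ) + 1) ^ s
  have hf : HasSum f (Li s x + Li s (-x)) :=
    (hasSum_Li hs hx).add (hasSum_Li hs (by rwa [abs_neg]))
  have heven : HasSum (fun k => f (2 * k)) 0 := by
    refine hasSum_zero.congr_fun fun k => ?_
    simp only [f, Odd.neg_pow ⟨k, rfl⟩ x]
    ring
  have hodd : HasSum (fun k => f (2 * k + 1)) (2 * Li s (x ^ 2) / 2 ^ s) := by
    refine (((hasSum_Li hs hx2).mul_left 2).div_const (2 ^ s)).congr_fun fun k => ?_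
    simp only [f, Even.neg_pow (n := 2 * k + 1 + 1) ⟨k + 1, by ring⟩ x]
    push_cast
    rw [show (2 * (k : ℝ) + 1 + 1) = 2 * ((k : ℝ) + 1) by ring, mul_pow, ← pow_mul]
    ring_nf
  exact hf.unique (by simpa using heven.even_add_odd hodd)

lemma Li_two_one : Li 2 1 = π ^ 2 / 6 := by
  simpa [Li] using ((hasSum_nat_add_iff' 1).mpr hasSum_zeta_two).tsum_eq

lemma Li_one_eq_neg_log (hx : |x| < 1) : Li 1 x = -log (1 - x) := by
  simpa [Li] using (hasSum_pow_div_log_of_abs_lt_one hx).tsum_eq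

lemma mul_tsum_pow_div_eq_Li (s : ℕ) (x : ℝ) :
    x * ∑' n : ℕ, x ^ n / ((n : ℝ) + 1) ^ s = Li s x := by
  rw [← tsum_mul_left]
  simp only [Li, pow_succ', mul_div_assoc]

lemma hasDerivAt_Li_succ (s : ℕ) (hx : |x| < 1) :
    HasDerivAt (Li (s + 1)) (∑' n : ℕ, x ^ n / ((n : ℝ) + 1) ^ s) x := by
  obtain ⟨r, hxr, hr1⟩ := exists_between hx
  have hr0 : 0 < r := (abs_nonneg x).trans_lt hxr
  have hterm (n : ℕ) (y : ℝ) : HasDerivAt (fun z => z ^ (n + 1) / ((n : ℝ) + 1) ^ (s + 1))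
      (y ^ n / ((n : ℝ) + 1) ^ s) y := by
    refine ((hasDerivAt_pow (n + 1) y).div_const _).congr_deriv ?_
    rw [Nat.add_sub_cancel]
    push_cast
    field_simp
    ring
  have hbound (n : ℕ) (y : ℝ) (hy : y ∈ Ioo (-r) r) : ‖y ^ n / ((n : ℝ) + 1) ^ s‖ ≤ r ^ n := by
    rw [norm_div, norm_pow, Real.norm_eq_abs, norm_of_nonneg (by positivity)]
    calc |y| ^ n / ((n : ℝ) + 1) ^ s ≤ |y| ^ n :=
          div_le_self (by positivity) (one_le_pow₀ (by linarith))
      _ ≤ r ^ n := by gcongr; exact abs_le.mpr ⟨hy.1.le, hy.2.le⟩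
  exact hasDerivAt_tsum_of_isPreconnected (summable_geometric_of_lt_one hr0.le hr1) isOpen_Ioo
    isPreconnected_Ioo (fun n y _ => hterm n y) hbound (y₀ := 0) ⟨by linarith, by linarith⟩
    (by simp) (abs_lt.mp hxr)

end Series

section Landen

variable {x : ℝ}

noncomputable def landenDefect (x : ℝ) : ℝ := Li 2 x + Li 2 (x / (x - 1)) + log (1 - x) ^ 2 / 2

lemma div_sub_one_mem_Icc (hx : x ∈ Icc (-1) (1 / 2)) : x / (x - 1) ∈ Icc (-1) (1 / 2) := by
  have hneg : x - 1 < 0 := by linarith [hx.2]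
  constructor
  · rw [le_div_iff_of_neg hneg]; linarith [hx.2]
  · rw [div_le_iff_of_neg hneg]; linarith [hx.1]

lemma div_sub_one_mem_Ioo (hx : x ∈ Ioo (-1) (1 / 2)) : x / (x - 1) ∈ Ioo (-1) (1 / 2) := by
  have hneg : x - 1 < 0 := by linarith [hx.2]
  constructor
  · rw [lt_div_iff_of_neg hneg]; linarith [hx.2]
  · rw [div_lt_iff_of_neg hneg]; linarith [hx.1]

lemma continuousOn_landenDefect : ContinuousOn landenDefect (Icc (-1) (1 / 2)) := by
  have hsub : Icc (-1 : ℝ) (1 / 2) ⊆ Icc (-1) 1 := Icc_subset_Icc_right (by norm_num)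
  have hquot : ContinuousOn (fun y : ℝ => y / (y - 1)) (Icc (-1) (1 / 2)) :=
    continuousOn_id.div (continuousOn_id.sub continuousOn_const)
      fun y hy => by linarith [hy.2]
  have hlog : ContinuousOn (fun y : ℝ => log (1 - y)) (Icc (-1) (1 / 2)) :=
    ContinuousOn.log (by fun_prop) fun y hy => by linarith [hy.2]
  exact (((continuousOn_Li le_rfl).mono hsub).add ((continuousOn_Li le_rfl).comp hquot
    fun y hy => hsub (div_sub_one_mem_Icc hy))).add ((hlog.pow 2).div_const 2)

lemma hasDerivAt_landenDefect (hx : x ∈ Ioo (-1) (1 / 2)) : HasDerivAt landenDefect 0 x := by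
  have hx1 : x - 1 ≠ 0 := by linarith [hx.2]
  have hxa : |x| < 1 := abs_lt.mpr ⟨hx.1, by linarith [hx.2]⟩
  have hta : |x / (x - 1)| < 1 := by
    obtain ⟨h1, h2⟩ := div_sub_one_mem_Ioo hx
    exact abs_lt.mpr ⟨h1, by linarith⟩
  have hquot : HasDerivAt (fun y => y / (y - 1)) (-1 / (x - 1) ^ 2) x := by
    refine ((hasDerivAt_id x).div ((hasDerivAt_id x).sub_const 1) hx1).congr_deriv ?_
    simp only [id]
    ring
  have hlog : HasDerivAt (fun y => log (1 - y)) (-1 / (1 - x)) x :=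
    ((hasDerivAt_id' x).const_sub 1).log (by linarith [hx.2]) |>.congr_deriv (by simp)
  refine (((hasDerivAt_Li_succ 1 hxa).add ((hasDerivAt_Li_succ 1 hta).comp x hquot)).add
    ((hlog.pow 2).div_const 2)).congr_deriv ?_
  -- at `x = 0` the two series terms cancel since `x / (x - 1) = 0`; otherwise divide by `x`
  rcases eq_or_ne x 0 with rfl | hx0
  · simp
  have h1x_ne : 1 - x ≠ 0 := by linarith [hx.2]
  have hone_sub : 1 - x / (x - 1) = (1 - x)⁻¹ := by field_simp; ring
  have hD₁ := mul_tsum_pow_div_eq_Li 1 x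
  have hD₂ := mul_tsum_pow_div_eq_Li 1 (x / (x - 1))
  rw [Li_one_eq_neg_log hxa] at hD₁
  rw [Li_one_eq_neg_log hta, hone_sub, log_inv, neg_neg] at hD₂
  generalize ∑' n : ℕ, x ^ n / ((n : ℝ) + 1) ^ 1 = D₁ at hD₁ ⊢
  generalize ∑' n : ℕ, (x / (x - 1)) ^ n / ((n : ℝ) + 1) ^ 1 = D₂ at hD₂ ⊢
  obtain rfl := eq_div_of_mul_eq hx0 ((mul_comm _ _).trans hD₁)
  obtain rfl := eq_div_of_mul_eq (div_ne_zero hx0 hx1) ((mul_comm _ _).trans hD₂)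
  field_simp
  ring

lemma landenDefect_eq_zero (hx : x ∈ Icc (-1) (1 / 2)) : landenDefect x = 0 := by
  have hzero : EqOn landenDefect 0 (Ioo (-1) (1 / 2)) := fun y hy =>
    (isOpen_Ioo.is_const_of_deriv_eq_zero isPreconnected_Ioo
      (fun z hz => (hasDerivAt_landenDefect hz).differentiableAt.differentiableWithinAt)
      (fun z hz => (hasDerivAt_landenDefect hz).deriv) hy (by norm_num : (0 : ℝ) ∈ _)).trans
      (by simp [landenDefect])
  exact hzero.of_subset_closure continuousOn_landenDefect continuousOn_const Ioo_subset_Icc_self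
    (by rw [closure_Ioo (by norm_num)]) hx

lemma Li_two_add_Li_two_div_sub_one (hx : x ∈ Icc (-1) (1 / 2)) :
    Li 2 x + Li 2 (x / (x - 1)) = -log (1 - x) ^ 2 / 2 := by
  have h := landenDefect_eq_zero hx
  rw [landenDefect] at h
  linarith

end Landen

lemma Li_two_neg_one : Li 2 (-1) = -π ^ 2 / 12 := by
  have h := Li_add_Li_neg le_rfl (by norm_num : |(1 : ℝ)| ≤ 1)
  rw [one_pow, Li_two_one] at h
  linarith

lemma Li_two_half : Li 2 (1 / 2) = π ^ 2 / 12 - log 2 ^ 2 / 2 := by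
  have h := Li_two_add_Li_two_div_sub_one (x := 1 / 2) (by norm_num)
  norm_num [Li_two_neg_one] at h
  rw [show log (1 / 2 : ℝ) = -log 2 by simp, neg_sq] at h
  linarith

theorem stmt_5 :
    Li 2 (1 / 3) - 1 / 6 * Li 2 (1 / 9)
      = Real.pi ^ 2 / 18 - (Real.log 3) ^ 2 / 6 := by
  have dup_third := Li_add_Li_neg le_rfl (by norm_num [abs_of_pos] : |(1 / 3 : ℝ)| ≤ 1)
  have dup_half := Li_add_Li_neg le_rfl (by norm_num [abs_of_pos] : |(1 / 2 : ℝ)| ≤ 1)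
  have landen_third := Li_two_add_Li_two_div_sub_one (x := 1 / 3) (by norm_num)
  have landen_neg_third := Li_two_add_Li_two_div_sub_one (x := -1 / 3) (by norm_num)
  have log_two_thirds : log (2 / 3) = log 2 - log 3 := log_div two_ne_zero three_ne_zero
  have log_four_thirds : log (4 / 3) = 2 * log 2 - log 3 := by
    rw [log_div four_ne_zero three_ne_zero, show (4 : ℝ) = 2 ^ 2 by norm_num, log_pow]
    norm_num
  norm_num [log_two_thirds, log_four_thirds] at dup_third dup_half landen_third landen_neg_third
  linear_combination (1 / 3) * dup_third + (2 / 3) * landen_third - (1 / 3) * landen_neg_third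
    - (2 / 3) * dup_half + (2 / 3) * Li_two_half
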